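/- arXiv:1006.1865 — 3 statements merged into one kernel-verified Lean document; each statement's English description precedes it below -/
import Mathlib

section
/- Probabilistic corollary: Fix λ ⊢ n. The random variable X defined by P(X = s − r) summed over outer corners c = (r,s) of λ with content s−r, where P(selecting corner c) = f^{λ+c}/((n+1) f^λ), satisfies E(X) = 0 and Var(X) = n; equivalently, Σ_{c=(r,s)∈C'[λ]} (s−r) f^{λ+c} = 0 and Σ_{c=(r,s)∈C'[λ]} (s−r)^2 f^{λ+c} = n(n+1) f^λ. -/
open Finset

/-- The Young diagram of a partition given by row lengths `f 1, f 2, …` (rows beyond `L` empty). -/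
def cells (f : ℕ → ℕ) (L : ℕ) : Finset (ℕ × ℕ) :=
  (Finset.Icc 1 L ×ˢ Finset.Icc 1 (f 1)).filter fun p => p.2 ≤ f p.1

/-- The `j`-th column length (the conjugate partition). -/
def conj (f : ℕ → ℕ) (L j : ℕ) : ℕ :=
  ((Finset.Icc 1 L).filter fun i => j ≤ f i).card

/-- Hook length of the square `(i,j)`. -/
def hook (f : ℕ → ℕ) (L i j : ℕ) : ℕ :=
  (f i - j) + (conj f L j - i) + 1

/-- Corners of the diagram: squares whose removal leaves a diagram. -/
def corners (f : ℕ → ℕ) (L : ℕ) : Finset (ℕ × ℕ) :=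
  (cells f L).filter fun p => p.2 = f p.1 ∧ f (p.1 + 1) < p.2

/-- Outer corners: squares outside the diagram whose addition gives a diagram. -/
def outerCorners (f : ℕ → ℕ) (L : ℕ) : Finset (ℕ × ℕ) :=
  ((Finset.Icc 1 (L + 1)) ×ˢ (Finset.Icc 1 (f 1 + 1))).filter
    fun p => p.2 = f p.1 + 1 ∧ (p.1 = 1 ∨ p.2 ≤ f (p.1 - 1))

/-- `f` encodes a partition: weakly decreasing rows, vanishing beyond `L`. -/
def IsPartitionFun (f : ℕ → ℕ) (L : ℕ) : Prop :=
  (∀ i, 1 ≤ i → f (i + 1) ≤ f i) ∧ (∀ i, L < i → f i = 0)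

/-- The number of standard Young tableaux of the given shape. -/
noncomputable def sytCard (f : ℕ → ℕ) (L : ℕ) : ℕ :=
  Nat.card {T : ℕ × ℕ → ℕ //
    Set.BijOn T (cells f L) (Finset.Icc 1 (cells f L).card) ∧
    (∀ p ∈ cells f L, ∀ q ∈ cells f L, p.1 ≤ q.1 → p.2 ≤ q.2 → p ≠ q → T p < T q) ∧
    ∀ p, p ∉ cells f L → T p = 0}

/-- Remove a cell from the end of row `r`. -/
def removeCell (f : ℕ → ℕ) (r : ℕ) : ℕ → ℕ := fun i => if i = r then f i - 1 else f i

/-- Add a cell at the end of row `r`. -/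
def addCell (f : ℕ → ℕ) (r : ℕ) : ℕ → ℕ := fun i => if i = r then f i + 1 else f i

namespace CMV

/-- rows where a cell can be added -/
def Rout (f : ℕ → ℕ) (L : ℕ) : Finset ℕ :=
  (Finset.Icc 1 (L+1)).filter fun r => r = 1 ∨ f r < f (r-1)

/-- rows where a cell can be removed -/
def Rin (f : ℕ → ℕ) (L : ℕ) : Finset ℕ :=
  (Finset.Icc 1 L).filter fun r => f (r+1) < f r

variable {f : ℕ → ℕ} {L : ℕ}

lemma anti (hf : IsPartitionFun f L) : ∀ {i j : ℕ}, 1 ≤ i → i ≤ j → f j ≤ f i := by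
  intro i j hi hij
  induction j, hij using Nat.le_induction with
  | base => exact le_rfl
  | succ j hij ih => exact le_trans (hf.1 j (le_trans hi hij)) ih

lemma mem_cells (hf : IsPartitionFun f L) {p : ℕ × ℕ} :
    p ∈ cells f L ↔ 1 ≤ p.1 ∧ 1 ≤ p.2 ∧ p.2 ≤ f p.1 := by
  simp only [cells, Finset.mem_filter, Finset.mem_product, Finset.mem_Icc]
  constructor
  · rintro ⟨⟨⟨h1, _⟩, ⟨h2, _⟩⟩, h3⟩; exact ⟨h1, h2, h3⟩
  · rintro ⟨h1, h2, h3⟩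
    have hL : p.1 ≤ L := by
      by_contra h
      rw [hf.2 p.1 (lt_of_not_ge h)] at h3; omega
    exact ⟨⟨⟨h1, hL⟩, ⟨h2, le_trans h3 (anti hf le_rfl h1)⟩⟩, h3⟩

lemma card_cells (hf : IsPartitionFun f L) :
    (cells f L).card = ∑ r ∈ Finset.Icc 1 L, f r := by
  have h : cells f L = (Finset.Icc 1 L).biUnion
      (fun r => ({r} : Finset ℕ) ×ˢ Finset.Icc 1 (f r)) := by
    ext p
    simp only [Finset.mem_biUnion, Finset.mem_product, Finset.mem_singleton, Finset.mem_Icc,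
      mem_cells hf]
    constructor
    · rintro ⟨h1, h2, h3⟩
      refine ⟨p.1, ⟨h1, ?_⟩, rfl, h2, h3⟩
      by_contra h
      rw [hf.2 p.1 (lt_of_not_ge h)] at h3; omega
    · rintro ⟨r, ⟨hr1, _⟩, rfl, h2, h3⟩; exact ⟨hr1, h2, h3⟩
  rw [h, Finset.card_biUnion]
  · refine Finset.sum_congr rfl fun r _ => ?_
    simp [Finset.card_product]
  · intro a _ b _ hab
    simp only [Finset.disjoint_left, Finset.mem_product, Finset.mem_singleton]
    rintro p ⟨rfl, -⟩ ⟨h, -⟩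
    exact hab h

lemma isPF_succ (hf : IsPartitionFun f L) : IsPartitionFun f (L+1) :=
  ⟨hf.1, fun i hi => hf.2 i (by omega)⟩

lemma cells_succ (hf : IsPartitionFun f L) : cells f (L+1) = cells f L := by
  ext p
  rw [mem_cells hf, mem_cells (isPF_succ hf)]

lemma sytCard_congr {g : ℕ → ℕ} {M : ℕ} (h : cells f L = cells g M) :
    sytCard f L = sytCard g M := by
  unfold sytCard
  rw [h]

lemma mem_Rout {r : ℕ} : r ∈ Rout f L ↔ (1 ≤ r ∧ r ≤ L + 1) ∧ (r = 1 ∨ f r < f (r-1)) := by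
  simp [Rout, Finset.mem_filter, Finset.mem_Icc]

lemma mem_Rin {r : ℕ} : r ∈ Rin f L ↔ (1 ≤ r ∧ r ≤ L) ∧ f (r+1) < f r := by
  simp [Rin, Finset.mem_filter, Finset.mem_Icc]

lemma isPF_addCell (hf : IsPartitionFun f L) {r : ℕ} (hr : r ∈ Rout f L) :
    IsPartitionFun (addCell f r) (L+1) := by
  rw [mem_Rout] at hr
  constructor
  · intro i hi
    unfold addCell
    rcases eq_or_ne (i+1) r with h | h
    · rw [if_pos h, if_neg (by omega)]
      have h1 : f r < f (r - 1) := by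
        rcases hr.2 with h1 | h1
        · omega
        · exact h1
      have h2 : r - 1 = i := by omega
      rw [h2] at h1
      rw [h]
      omega
    · rw [if_neg h]
      rcases eq_or_ne i r with h2 | h2
      · rw [if_pos h2]
        have := hf.1 i hi; omega
      · rw [if_neg h2]; exact hf.1 i hi
  · intro i hi
    unfold addCell
    rw [if_neg (by omega), hf.2 i (by omega)]

lemma isPF_removeCell (hf : IsPartitionFun f L) {r : ℕ} (hr : r ∈ Rin f L) :
    IsPartitionFun (removeCell f r) L := by
  rw [mem_Rin] at hr
  constructor
  · intro i hi
    unfold removeCell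
    rcases eq_or_ne (i+1) r with h | h
    · rw [if_pos h, if_neg (by omega)]
      have := hf.1 i hi; omega
    · rw [if_neg h]
      rcases eq_or_ne i r with h2 | h2
      · rw [if_pos h2, h2]; omega
      · rw [if_neg h2]; exact hf.1 i hi
  · intro i hi
    unfold removeCell
    rw [if_neg (by omega), hf.2 i hi]

lemma addCell_pos {r : ℕ} (hr : r ∈ Rin f L) : 1 ≤ f r := by
  rw [mem_Rin] at hr; omega

lemma cells_addCell (hf : IsPartitionFun f L) {r : ℕ} (hr : r ∈ Rout f L) :
    cells (addCell f r) (L+1) = insert (r, f r + 1) (cells f L) := by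
  have hr' := hr
  rw [mem_Rout] at hr'
  ext p
  rw [mem_cells (isPF_addCell hf hr), Finset.mem_insert, mem_cells hf]
  unfold addCell
  rcases eq_or_ne p.1 r with h | h
  · rw [if_pos h]
    constructor
    · rintro ⟨h1, h2, h3⟩
      rcases eq_or_ne p.2 (f r + 1) with h4 | h4
      · left
        rw [Prod.ext_iff]; exact ⟨h, h4⟩
      · right
        subst h
        exact ⟨h1, h2, by omega⟩
    · rintro (h4 | ⟨h1, h2, h3⟩)
      · subst h4
        exact ⟨by omega, by omega, le_rfl⟩
      · subst h; exact ⟨h1, h2, by omega⟩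
  · rw [if_neg h]
    constructor
    · rintro ⟨h1, h2, h3⟩; exact Or.inr ⟨h1, h2, h3⟩
    · rintro (h4 | ⟨h1, h2, h3⟩)
      · exfalso; apply h; rw [h4]
      · exact ⟨h1, h2, h3⟩

lemma cells_removeCell (hf : IsPartitionFun f L) {r : ℕ} (hr : r ∈ Rin f L) :
    cells (removeCell f r) L = (cells f L).erase (r, f r) := by
  have hr' := hr
  rw [mem_Rin] at hr'
  ext p
  rw [mem_cells (isPF_removeCell hf hr), Finset.mem_erase, mem_cells hf]
  unfold removeCell
  rcases eq_or_ne p.1 r with h | h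
  · rw [if_pos h]
    constructor
    · rintro ⟨h1, h2, h3⟩
      refine ⟨?_, h1, h2, by omega⟩
      intro hp
      rw [hp] at h3
      simp only at h3
      omega
    · rintro ⟨h4, h1, h2, h3⟩
      refine ⟨h1, h2, ?_⟩
      have hne : p.2 ≠ f r := by
        intro hh
        exact h4 (Prod.ext_iff.mpr ⟨h, hh⟩)
      subst h; omega
  · rw [if_neg h]
    constructor
    · rintro ⟨h1, h2, h3⟩
      refine ⟨?_, h1, h2, h3⟩
      intro hp; rw [hp] at h; exact h rfl
    · rintro ⟨h4, h1, h2, h3⟩; exact ⟨h1, h2, h3⟩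

end CMV

namespace CMV

variable {f : ℕ → ℕ} {L : ℕ}

-- function identities
lemma removeCell_addCell (r : ℕ) : removeCell (addCell f r) r = f := by
  funext i
  simp only [removeCell, addCell]
  rcases eq_or_ne i r with rfl | h <;> simp_all

lemma addCell_removeCell {r : ℕ} (h : 1 ≤ f r) : addCell (removeCell f r) r = f := by
  funext i
  simp only [removeCell, addCell]
  rcases eq_or_ne i r with rfl | h2 <;> simp_all <;> omega

lemma removeCell_addCell_comm {r r' : ℕ} (h : r ≠ r') :
    removeCell (addCell f r) r' = addCell (removeCell f r') r := by
  funext i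
  simp only [removeCell, addCell]
  rcases eq_or_ne i r with rfl | h1 <;> rcases eq_or_ne i r' with rfl | h2 <;>
    simp_all

lemma addCell_apply_ne {r i : ℕ} (h : i ≠ r) : addCell f r i = f i := if_neg h

lemma removeCell_apply_ne {r i : ℕ} (h : i ≠ r) : removeCell f r i = f i := if_neg h

lemma addCell_apply_self (r : ℕ) : addCell f r r = f r + 1 := if_pos rfl

lemma removeCell_apply_self (r : ℕ) : removeCell f r r = f r - 1 := if_pos rfl

-- r is removable in λ + c_r
lemma self_mem_Rin_addCell (hf : IsPartitionFun f L) {r : ℕ} (hr : r ∈ Rout f L) :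
    r ∈ Rin (addCell f r) (L+1) := by
  rw [mem_Rout] at hr
  rw [mem_Rin, addCell_apply_self, addCell_apply_ne (by omega)]
  have := hf.1 r hr.1.1
  exact ⟨⟨hr.1.1, hr.1.2⟩, by omega⟩

-- r' is addable in λ - d_{r'}
lemma self_mem_Rout_removeCell (hf : IsPartitionFun f L) {r' : ℕ} (hr : r' ∈ Rin f L) :
    r' ∈ Rout (removeCell f r') L := by
  rw [mem_Rin] at hr
  rw [mem_Rout, removeCell_apply_self]
  refine ⟨⟨hr.1.1, by omega⟩, ?_⟩
  rcases eq_or_ne r' 1 with h | h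
  · exact Or.inl h
  · right
    rw [removeCell_apply_ne (by omega)]
    have : f r' ≤ f (r' - 1) := by
      have h2 := anti hf (i := r' - 1) (j := r') (by omega) (by omega)
      exact h2
    omega

-- the key swap equivalence
lemma swap_mem (hf : IsPartitionFun f L) (r r' : ℕ) :
    (r ∈ Rout f L ∧ r' ∈ (Rin (addCell f r) (L+1)).erase r) ↔
    (r' ∈ Rin f L ∧ r ∈ (Rout (removeCell f r') L).erase r') := by
  simp only [Finset.mem_erase, mem_Rout, mem_Rin]
  constructor
  · rintro ⟨⟨hr1, hr2⟩, hne, ⟨hr'1, hr'2⟩⟩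
    rcases eq_or_ne (r' + 1) r with h | h
    · -- r = r' + 1
      rw [h, addCell_apply_self, addCell_apply_ne hne] at hr'2
      -- hr'2 : f r + 1 < f r'
      refine ⟨⟨⟨hr'1.1, by omega⟩, ?_⟩, Ne.symm hne, ⟨hr1.1, hr1.2⟩, Or.inr ?_⟩
      · rw [h]; omega
      · rw [removeCell_apply_ne (Ne.symm hne)]
        have h2 : r - 1 = r' := by omega
        rw [h2, removeCell_apply_self]
        omega
    · rw [addCell_apply_ne h, addCell_apply_ne hne] at hr'2
      have hr'L : r' ≤ L := by
        by_contra hc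
        have e1 : f (r' + 1) = 0 := hf.2 _ (by omega)
        have e2 : f r' = 0 := hf.2 _ (by omega)
        omega
      refine ⟨⟨⟨hr'1.1, hr'L⟩, hr'2⟩, Ne.symm hne, ⟨hr1.1, hr1.2⟩, ?_⟩
      rcases hr2 with h1 | h1
      · exact Or.inl h1
      · right
        rw [removeCell_apply_ne (Ne.symm hne)]
        rcases eq_or_ne (r - 1) r' with h2 | h2
        · exfalso; apply h; omega
        · rw [removeCell_apply_ne h2]; exact h1
  · rintro ⟨⟨hr'1, hr'2⟩, hne, ⟨hr1, hr2⟩⟩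
    rcases eq_or_ne (r - 1) r' with h | h
    · -- r = r' + 1 (note r ≠ r' and r ≥ 1; if r = 1 then r' = 0 impossible)
      have hrr : r = r' + 1 := by
        rcases hr'1 with ⟨a, b⟩; omega
      have h1 : f r < f r' - 1 := by
        rcases hr2 with h1 | h1
        · exfalso; omega
        · rw [removeCell_apply_ne hne, h, removeCell_apply_self] at h1
          exact h1
      refine ⟨⟨⟨hr1.1, hr1.2⟩, Or.inr ?_⟩, Ne.symm hne, ⟨hr'1.1, by omega⟩, ?_⟩
      · rw [h]; omega
      · rw [addCell_apply_ne (Ne.symm hne), ← hrr, addCell_apply_self]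
        omega
    · have h1 : r = 1 ∨ f r < f (r - 1) := by
        rcases hr2 with h1 | h1
        · exact Or.inl h1
        · right
          rw [removeCell_apply_ne hne, removeCell_apply_ne h] at h1
          exact h1
      refine ⟨⟨⟨hr1.1, hr1.2⟩, h1⟩, Ne.symm hne, ⟨hr'1.1, by omega⟩, ?_⟩
      have h2 : r' + 1 ≠ r := by omega
      rw [addCell_apply_ne h2, addCell_apply_ne (Ne.symm hne)]
      exact hr'2

end CMV

namespace CMV

variable {f : ℕ → ℕ} {L : ℕ}

lemma twice_sum_Icc (L : ℕ) : 2 * ∑ r ∈ Finset.Icc 1 L, (r : ℤ) = L * (L + 1) := by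
  induction L with
  | zero => simp
  | succ n ih =>
    have h : Finset.Icc 1 (n+1) = insert (n+1) (Finset.Icc 1 n) := by
      ext r; simp only [Finset.mem_insert, Finset.mem_Icc]; omega
    rw [h, Finset.sum_insert (by simp)]
    push_cast
    push_cast at ih
    linarith

/-- generic reindexing of corner sums -/
lemma shape_gen (hf : IsPartitionFun f L) (g : ℤ → ℤ) :
    ∑ r ∈ Rout f L, g ((f r : ℤ) + 1 - r) =
      (∑ r ∈ Rin f L, g ((f r : ℤ) - r)) +
      ((∑ r ∈ Finset.Icc 1 (L+1), g ((f r : ℤ) + 1 - r)) -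
        ∑ r ∈ Finset.Icc 1 L, g ((f r : ℤ) - r)) := by
  classical
  set D : Finset ℕ := (Finset.Icc 2 (L+1)).filter (fun r => f r < f (r-1)) with hD
  -- Rout = insert 1 D
  have h1 : Rout f L = insert 1 D := by
    ext r
    simp only [hD, mem_Rout, Finset.mem_insert, Finset.mem_filter, Finset.mem_Icc]
    constructor
    · rintro ⟨⟨a, b⟩, h | h⟩
      · exact Or.inl h
      · rcases eq_or_ne r 1 with rfl | hr1
        · exact Or.inl rfl
        · exact Or.inr ⟨⟨by omega, b⟩, h⟩
    · rintro (rfl | ⟨⟨a, b⟩, h⟩)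
      · exact ⟨⟨le_rfl, by omega⟩, Or.inl rfl⟩
      · exact ⟨⟨by omega, b⟩, Or.inr h⟩
  have h1' : (1 : ℕ) ∉ D := by simp [hD]
  -- Rin sum = sum over D of g (f (r-1) - (r-1))
  have h2 : ∑ r ∈ Rin f L, g ((f r : ℤ) - r) = ∑ r ∈ D, g ((f (r-1) : ℤ) - (r-1 : ℕ)) := by
    refine Finset.sum_nbij' (fun r => r + 1) (fun r => r - 1) ?_ ?_ ?_ ?_ ?_
    · intro a ha
      rw [mem_Rin] at ha
      show a + 1 ∈ D
      simp only [hD, Finset.mem_filter, Finset.mem_Icc]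
      exact ⟨⟨by omega, by omega⟩, by simpa using ha.2⟩
    · intro a ha
      simp only [hD, Finset.mem_filter, Finset.mem_Icc] at ha
      show a - 1 ∈ Rin f L
      rw [mem_Rin]
      have e : a - 1 + 1 = a := by omega
      rw [e]
      exact ⟨⟨by omega, by omega⟩, ha.2⟩
    · intro a ha; show a + 1 - 1 = a; omega
    · intro a ha
      simp only [hD, Finset.mem_filter, Finset.mem_Icc] at ha
      show a - 1 + 1 = a; omega
    · intro a ha
      show g ((f a : ℤ) - a) = g ((f (a + 1 - 1) : ℤ) - ((a + 1 - 1 : ℕ) : ℤ))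
      rw [Nat.add_sub_cancel]
  -- extend D sums to Icc 2 (L+1)
  have h3 : ∑ r ∈ D, (g ((f r : ℤ) + 1 - r) - g ((f (r-1) : ℤ) - (r-1 : ℕ))) =
      ∑ r ∈ Finset.Icc 2 (L+1), (g ((f r : ℤ) + 1 - r) - g ((f (r-1) : ℤ) - (r-1 : ℕ))) := by
    rw [hD]
    refine Finset.sum_filter_of_ne ?_
    intro r hr hne
    simp only [Finset.mem_Icc] at hr
    by_contra hc
    push_neg at hc
    have hle : f r ≤ f (r-1) := anti hf (by omega) (by omega)
    have heq : f r = f (r-1) := by omega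
    apply hne
    have e : ((f (r-1) : ℤ) - ((r-1 : ℕ) : ℤ)) = ((f r : ℤ) + 1 - r) := by
      rw [← heq]
      have e2 : ((r - 1 : ℕ) : ℤ) = (r : ℤ) - 1 := by
        have : 2 ≤ r := hr.1
        omega
      rw [e2]
      ring
    rw [e]
    ring
  -- reindex the second part of the Icc sum
  have h4 : ∑ r ∈ Finset.Icc 2 (L+1), g ((f (r-1) : ℤ) - (r-1 : ℕ)) =
      ∑ r ∈ Finset.Icc 1 L, g ((f r : ℤ) - r) := by
    refine Finset.sum_nbij' (fun r => r - 1) (fun r => r + 1) ?_ ?_ ?_ ?_ ?_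
    · intro a ha
      simp only [Finset.mem_Icc] at ha
      show a - 1 ∈ Finset.Icc 1 L
      simp only [Finset.mem_Icc]
      omega
    · intro a ha
      simp only [Finset.mem_Icc] at ha
      show a + 1 ∈ Finset.Icc 2 (L+1)
      simp only [Finset.mem_Icc]
      omega
    · intro a ha
      simp only [Finset.mem_Icc] at ha
      show a - 1 + 1 = a
      omega
    · intro a ha; show a + 1 - 1 = a; omega
    · intro a ha; rfl
  have h5 : ∑ r ∈ Finset.Icc 1 (L+1), g ((f r : ℤ) + 1 - r) =
      g ((f 1 : ℤ)) + ∑ r ∈ Finset.Icc 2 (L+1), g ((f r : ℤ) + 1 - r) := by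
    have e : Finset.Icc 1 (L+1) = insert 1 (Finset.Icc 2 (L+1)) := by
      ext r
      simp only [Finset.mem_insert, Finset.mem_Icc]
      omega
    rw [e, Finset.sum_insert (by simp)]
    norm_num
  rw [h1, Finset.sum_insert h1', h2, h5]
  have h7 : ∑ r ∈ D, g ((f r : ℤ) + 1 - r) =
      (∑ r ∈ D, g ((f (r-1) : ℤ) - (r-1 : ℕ))) +
      ∑ r ∈ D, (g ((f r : ℤ) + 1 - r) - g ((f (r-1) : ℤ) - (r-1 : ℕ))) := by
    rw [← Finset.sum_add_distrib]
    apply Finset.sum_congr rfl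
    intro r _; ring
  have h6 : ∑ r ∈ Finset.Icc 2 (L+1), g ((f r : ℤ) + 1 - r) =
      (∑ r ∈ Finset.Icc 2 (L+1), g ((f (r-1) : ℤ) - (r-1 : ℕ))) +
      ∑ r ∈ D, (g ((f r : ℤ) + 1 - r) - g ((f (r-1) : ℤ) - (r-1 : ℕ))) := by
    rw [h3, ← Finset.sum_add_distrib]
    apply Finset.sum_congr rfl
    intro r _; ring
  have hg1 : g ((f 1 : ℤ) + 1 - ((1:ℕ) : ℤ)) = g ((f 1 : ℤ)) := by norm_num
  rw [hg1, h7, h6, h4]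
  ring

lemma shape1 (hf : IsPartitionFun f L) :
    ∑ r ∈ Rout f L, ((f r : ℤ) + 1 - r) = ∑ r ∈ Rin f L, ((f r : ℤ) - r) := by
  have h := shape_gen hf id
  simp only [id] at h
  have hL : f (L+1) = 0 := hf.2 _ (by omega)
  have h1 : Finset.Icc 1 (L+1) = insert (L+1) (Finset.Icc 1 L) := by
    ext r; simp only [Finset.mem_insert, Finset.mem_Icc]; omega
  have h2 : ∑ r ∈ Finset.Icc 1 (L+1), ((f r : ℤ) + 1 - r) =
      ∑ r ∈ Finset.Icc 1 L, ((f r : ℤ) - r) := by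
    rw [h1, Finset.sum_insert (by simp), hL]
    have h3 : ∑ r ∈ Finset.Icc 1 L, (((f r : ℤ) + 1 - r) - ((f r : ℤ) - r)) = L := by
      have h4 : ∀ r ∈ Finset.Icc 1 L, ((f r : ℤ) + 1 - r) - ((f r : ℤ) - r) = 1 :=
        fun r _ => by ring
      rw [Finset.sum_congr rfl h4, Finset.sum_const, Nat.card_Icc]
      simp
    rw [Finset.sum_sub_distrib] at h3
    push_cast
    linarith
  rw [h, h2]
  ring

lemma shape2 (hf : IsPartitionFun f L) :
    ∑ r ∈ Rout f L, ((f r : ℤ) + 1 - r)^2 =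
      (∑ r ∈ Rin f L, ((f r : ℤ) - r)^2) + 2 * ∑ r ∈ Finset.Icc 1 L, (f r : ℤ) := by
  have h := shape_gen hf (fun x => x^2)
  have hL : f (L+1) = 0 := hf.2 _ (by omega)
  have h1 : Finset.Icc 1 (L+1) = insert (L+1) (Finset.Icc 1 L) := by
    ext r; simp only [Finset.mem_insert, Finset.mem_Icc]; omega
  have h2 : ∑ r ∈ Finset.Icc 1 (L+1), ((f r : ℤ) + 1 - r)^2 =
      (∑ r ∈ Finset.Icc 1 L, ((f r : ℤ) - r)^2) + 2 * ∑ r ∈ Finset.Icc 1 L, (f r : ℤ) := by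
    rw [h1, Finset.sum_insert (by simp), hL]
    have hb : (((0:ℕ) : ℤ) + 1 - ((L+1 : ℕ) : ℤ))^2 = (L:ℤ)^2 := by push_cast; ring
    rw [hb]
    have h3 : ∑ r ∈ Finset.Icc 1 L, (((f r : ℤ) + 1 - r)^2 - ((f r : ℤ) - r)^2) =
        2 * (∑ r ∈ Finset.Icc 1 L, (f r : ℤ)) - 2 * (∑ r ∈ Finset.Icc 1 L, (r : ℤ)) + L := by
      have h4 : ∀ r ∈ Finset.Icc 1 L, ((f r : ℤ) + 1 - r)^2 - ((f r : ℤ) - r)^2 =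
          (2 * (f r : ℤ) - 2 * (r : ℤ)) + 1 := fun r _ => by ring
      rw [Finset.sum_congr rfl h4, Finset.sum_add_distrib, Finset.sum_sub_distrib,
        ← Finset.mul_sum, ← Finset.mul_sum, Finset.sum_const, Nat.card_Icc]
      simp
    rw [Finset.sum_sub_distrib] at h3
    have h5 := twice_sum_Icc L
    nlinarith [h3, h5]
  rw [h, h2]
  ring

end CMV

namespace CMV

variable {f : ℕ → ℕ} {L : ℕ}

def IsSYT (f : ℕ → ℕ) (L : ℕ) (T : ℕ × ℕ → ℕ) : Prop :=
  Set.BijOn T (cells f L) (Finset.Icc 1 (cells f L).card) ∧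
  (∀ p ∈ cells f L, ∀ q ∈ cells f L, p.1 ≤ q.1 → p.2 ≤ q.2 → p ≠ q → T p < T q) ∧
  ∀ p, p ∉ cells f L → T p = 0

lemma sytCard_eq (f : ℕ → ℕ) (L : ℕ) : sytCard f L = Nat.card {T // IsSYT f L T} := rfl

instance sytFinite (f : ℕ → ℕ) (L : ℕ) : Finite {T : ℕ × ℕ → ℕ // IsSYT f L T} := by
  classical
  let F : {T : ℕ × ℕ → ℕ // IsSYT f L T} →
      ({p // p ∈ cells f L} → {m // m ∈ Finset.Icc 1 (cells f L).card}) :=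
    fun T p => ⟨T.1 p.1, by
      have h := T.2.1.1 (Finset.mem_coe.2 p.2)
      exact Finset.mem_coe.1 h⟩
  have hinj : Function.Injective F := by
    intro a b hab
    apply Subtype.ext
    funext q
    by_cases hq : q ∈ cells f L
    · have h := congrFun hab ⟨q, hq⟩
      simpa [F, Subtype.ext_iff] using h
    · rw [a.2.2.2 q hq, b.2.2.2 q hq]
  exact Finite.of_injective F hinj

lemma corner_mem (hf : IsPartitionFun f L) {r : ℕ} (hr : r ∈ Rin f L) :
    (r, f r) ∈ cells f L := by
  rw [mem_Rin] at hr
  rw [mem_cells hf]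
  exact ⟨hr.1.1, by omega, le_rfl⟩

lemma no_bigger (hf : IsPartitionFun f L) {r : ℕ} (hr : r ∈ Rin f L) {q : ℕ × ℕ}
    (hq : q ∈ cells f L) (h1 : r ≤ q.1) (h2 : f r ≤ q.2) (hne : q ≠ (r, f r)) : False := by
  have hr' := hr
  rw [mem_Rin] at hr'
  rw [mem_cells hf] at hq
  have ha : f q.1 ≤ f r := anti hf hr'.1.1 h1
  have hq2 : q.2 = f r := by omega
  have hq1 : q.1 ≠ r := by
    intro h
    exact hne (Prod.ext_iff.mpr ⟨h, hq2⟩)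
  have hgt : r + 1 ≤ q.1 := by omega
  have : f q.1 ≤ f (r+1) := anti hf (by omega) hgt
  omega

lemma max_cell (hf : IsPartitionFun f L) {T : ℕ × ℕ → ℕ} (hT : IsSYT f L T) {p : ℕ × ℕ}
    (hp : p ∈ cells f L) (hTp : T p = (cells f L).card) :
    p.1 ∈ Rin f L ∧ p = (p.1, f p.1) := by
  set n := (cells f L).card with hn
  have hpc := (mem_cells hf).1 hp
  have hbound : ∀ q, q ∈ cells f L → T q ≤ n := by
    intro q hq
    have h := hT.1.1 (Finset.mem_coe.2 hq)
    have h2 := Finset.mem_coe.1 h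
    rw [Finset.mem_Icc] at h2
    exact h2.2
  have hclaim1 : p.2 = f p.1 := by
    by_contra hc
    have hlt : p.2 < f p.1 := lt_of_le_of_ne hpc.2.2 hc
    have hq : (p.1, p.2 + 1) ∈ cells f L := by
      rw [mem_cells hf]; dsimp only; exact ⟨hpc.1, by omega, by omega⟩
    have := hT.2.1 p hp (p.1, p.2+1) hq le_rfl (by dsimp only; omega)
      (by intro h; rw [Prod.ext_iff] at h; dsimp only at h; omega)
    have := hbound _ hq
    omega
  have hclaim2 : f (p.1 + 1) < p.2 := by
    by_contra hc
    push_neg at hc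
    have hq : (p.1 + 1, p.2) ∈ cells f L := by
      rw [mem_cells hf]; dsimp only; exact ⟨by omega, hpc.2.1, hc⟩
    have := hT.2.1 p hp (p.1+1, p.2) hq (by dsimp only; omega) le_rfl
      (by intro h; rw [Prod.ext_iff] at h; dsimp only at h; omega)
    have := hbound _ hq
    omega
  have hL : p.1 ≤ L := by
    by_contra hc
    have := hf.2 p.1 (by omega)
    omega
  refine ⟨?_, Prod.ext_iff.mpr ⟨rfl, hclaim1⟩⟩
  rw [mem_Rin]
  exact ⟨⟨hpc.1, hL⟩, by omega⟩

lemma exists_max (hf : IsPartitionFun f L) {T : ℕ × ℕ → ℕ} (hT : IsSYT f L T)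
    (hpos : 1 ≤ (cells f L).card) :
    ∃ r, r ∈ Rin f L ∧ T (r, f r) = (cells f L).card := by
  have hmem : (cells f L).card ∈ (Finset.Icc 1 (cells f L).card : Finset ℕ) := by
    rw [Finset.mem_Icc]; omega
  obtain ⟨p, hp, hTp⟩ := hT.1.2.2 (Finset.mem_coe.2 hmem)
  have hp' := Finset.mem_coe.1 hp
  obtain ⟨hr, hpe⟩ := max_cell hf hT hp' hTp
  exact ⟨p.1, hr, by rw [← hpe]; exact hTp⟩

lemma unique_max {T : ℕ × ℕ → ℕ} (hf : IsPartitionFun f L) (hT : IsSYT f L T) {r r' : ℕ}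
    (h1 : r ∈ Rin f L) (h2 : r' ∈ Rin f L)
    (e1 : T (r, f r) = (cells f L).card) (e2 : T (r', f r') = (cells f L).card) : r = r' := by
  have := hT.1.2.1 (Finset.mem_coe.2 (corner_mem hf h1)) (Finset.mem_coe.2 (corner_mem hf h2))
    (by rw [e1, e2])
  exact congrArg Prod.fst this

lemma down (hf : IsPartitionFun f L) {r : ℕ} (hr : r ∈ Rin f L) {T : ℕ × ℕ → ℕ}
    (hT : IsSYT f L T) (hmax : T (r, f r) = (cells f L).card) :
    IsSYT (removeCell f r) L (fun q => if q = (r, f r) then 0 else T q) := by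
  classical
  set n := (cells f L).card with hn
  have hcells : cells (removeCell f r) L = (cells f L).erase (r, f r) := cells_removeCell hf hr
  have hmem : (r, f r) ∈ cells f L := corner_mem hf hr
  have hpos : 1 ≤ n := Finset.card_pos.2 ⟨_, hmem⟩
  have hcard : (cells (removeCell f r) L).card = n - 1 := by
    rw [hcells, Finset.card_erase_of_mem hmem]
  have hbound : ∀ q, q ∈ cells f L → 1 ≤ T q ∧ T q ≤ n := by
    intro q hq
    have h := Finset.mem_coe.1 (hT.1.1 (Finset.mem_coe.2 hq))
    rw [Finset.mem_Icc] at h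
    exact h
  have hsub : ∀ q, q ∈ cells (removeCell f r) L → q ∈ cells f L ∧ q ≠ (r, f r) := by
    intro q hq
    rw [hcells, Finset.mem_erase] at hq
    exact ⟨hq.2, hq.1⟩
  unfold IsSYT
  rw [hcard]
  refine ⟨⟨?_, ?_, ?_⟩, ?_, ?_⟩
  · -- MapsTo
    intro q hq
    obtain ⟨hq1, hq2⟩ := hsub q (Finset.mem_coe.1 hq)
    simp only [if_neg hq2]
    have hb := hbound q hq1
    have hne : T q ≠ n := by
      intro h
      apply hq2
      exact hT.1.2.1 (Finset.mem_coe.2 hq1) (Finset.mem_coe.2 hmem) (by rw [h, hmax])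
    simp only [Finset.coe_Icc, Set.mem_Icc]
    omega
  · -- InjOn
    intro a ha b hb hab
    obtain ⟨ha1, ha2⟩ := hsub a (Finset.mem_coe.1 ha)
    obtain ⟨hb1, hb2⟩ := hsub b (Finset.mem_coe.1 hb)
    simp only [if_neg ha2, if_neg hb2] at hab
    exact hT.1.2.1 (Finset.mem_coe.2 ha1) (Finset.mem_coe.2 hb1) hab
  · -- SurjOn
    intro m hm
    simp only [Finset.coe_Icc, Set.mem_Icc] at hm
    have hm' : m ∈ (Finset.Icc 1 n : Finset ℕ) := by rw [Finset.mem_Icc]; omega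
    obtain ⟨p, hp, hTp⟩ := hT.1.2.2 (Finset.mem_coe.2 hm')
    have hp' := Finset.mem_coe.1 hp
    have hpne : p ≠ (r, f r) := by
      intro h
      rw [h, hmax] at hTp
      omega
    refine ⟨p, ?_, ?_⟩
    · rw [hcells]
      exact Finset.mem_coe.2 (Finset.mem_erase.2 ⟨hpne, hp'⟩)
    · simp only [if_neg hpne]; exact hTp
  · -- monotone
    intro p hp q hq h1 h2 hne
    obtain ⟨hp1, hp2⟩ := hsub p hp
    obtain ⟨hq1, hq2⟩ := hsub q hq
    simp only [if_neg hp2, if_neg hq2]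
    exact hT.2.1 p hp1 q hq1 h1 h2 hne
  · -- zero outside
    intro p hp
    by_cases h : p = (r, f r)
    · simp only [if_pos h]
    · simp only [if_neg h]
      apply hT.2.2
      intro hc
      apply hp
      rw [hcells]
      exact Finset.mem_erase.2 ⟨h, hc⟩

lemma up (hf : IsPartitionFun f L) {r : ℕ} (hr : r ∈ Rin f L) {T' : ℕ × ℕ → ℕ}
    (hT' : IsSYT (removeCell f r) L T') :
    IsSYT f L (fun q => if q = (r, f r) then (cells f L).card else T' q) := by
  classical
  set n := (cells f L).card with hn
  have hcells : cells (removeCell f r) L = (cells f L).erase (r, f r) := cells_removeCell hf hr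
  have hmem : (r, f r) ∈ cells f L := corner_mem hf hr
  have hpos : 1 ≤ n := Finset.card_pos.2 ⟨_, hmem⟩
  have hcard : (cells (removeCell f r) L).card = n - 1 := by
    rw [hcells, Finset.card_erase_of_mem hmem]
  have hbound : ∀ q, q ∈ cells (removeCell f r) L → 1 ≤ T' q ∧ T' q ≤ n - 1 := by
    intro q hq
    have h := Finset.mem_coe.1 (hT'.1.1 (Finset.mem_coe.2 hq))
    rw [hcard, Finset.mem_Icc] at h
    exact h
  have hsub : ∀ q, q ∈ cells f L → q ≠ (r, f r) → q ∈ cells (removeCell f r) L := by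
    intro q hq hne
    rw [hcells]
    exact Finset.mem_erase.2 ⟨hne, hq⟩
  unfold IsSYT
  refine ⟨⟨?_, ?_, ?_⟩, ?_, ?_⟩
  · -- MapsTo
    intro q hq
    by_cases h : q = (r, f r)
    · simp only [if_pos h, Finset.coe_Icc, Set.mem_Icc]
      omega
    · have hq' := hsub q (Finset.mem_coe.1 hq) h
      have hb := hbound q hq'
      simp only [if_neg h, Finset.coe_Icc, Set.mem_Icc]
      omega
  · -- InjOn
    intro a ha b hb hab
    by_cases h1 : a = (r, f r) <;> by_cases h2 : b = (r, f r)
    · rw [h1, h2]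
    · exfalso
      have hb' := hbound b (hsub b (Finset.mem_coe.1 hb) h2)
      simp only [if_pos h1, if_neg h2] at hab
      omega
    · exfalso
      have ha' := hbound a (hsub a (Finset.mem_coe.1 ha) h1)
      simp only [if_neg h1, if_pos h2] at hab
      omega
    · simp only [if_neg h1, if_neg h2] at hab
      exact hT'.1.2.1 (Finset.mem_coe.2 (hsub a (Finset.mem_coe.1 ha) h1))
        (Finset.mem_coe.2 (hsub b (Finset.mem_coe.1 hb) h2)) hab
  · -- SurjOn
    intro m hm
    simp only [Finset.coe_Icc, Set.mem_Icc] at hm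
    by_cases h : m = n
    · exact ⟨(r, f r), Finset.mem_coe.2 hmem, by simp; omega⟩
    · have hm' : m ∈ (Finset.Icc 1 ((cells (removeCell f r) L).card) : Finset ℕ) := by
        rw [hcard, Finset.mem_Icc]; omega
      obtain ⟨p, hp, hTp⟩ := hT'.1.2.2 (Finset.mem_coe.2 hm')
      have hp' := Finset.mem_coe.1 hp
      have hpe : p ≠ (r, f r) := by
        intro hc
        rw [hcells, Finset.mem_erase] at hp'
        exact hp'.1 hc
      refine ⟨p, ?_, ?_⟩
      · rw [hcells, Finset.mem_coe, Finset.mem_erase] at hp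
        exact Finset.mem_coe.2 hp.2
      · simp only [if_neg hpe]; exact hTp
  · -- monotone
    intro p hp q hq h1 h2 hne
    by_cases hq' : q = (r, f r)
    · have hpe : p ≠ (r, f r) := by
        intro hc; rw [hc] at hne; exact hne hq'.symm
      have hb := hbound p (hsub p hp hpe)
      simp only [if_pos hq', if_neg hpe]
      omega
    · by_cases hp' : p = (r, f r)
      · exfalso
        rw [hp'] at h1 h2
        dsimp only at h1 h2
        exact no_bigger hf hr hq h1 h2 hq' 
      · simp only [if_neg hp', if_neg hq']
        exact hT'.2.1 p (hsub p hp hp') q (hsub q hq hq') h1 h2 hne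
  · -- zero outside
    intro p hp
    have hpe : p ≠ (r, f r) := by
      intro hc; rw [hc] at hp; exact hp hmem
    simp only [if_neg hpe]
    apply hT'.2.2
    intro hc
    apply hp
    rw [hcells, Finset.mem_erase] at hc
    exact hc.2

end CMV

namespace CMV

variable {f : ℕ → ℕ} {L : ℕ}

lemma sig_ext {s : Finset ℕ} {Q : ℕ → (ℕ × ℕ → ℕ) → Prop}
    (a b : Σ r : {x // x ∈ s}, {T : ℕ × ℕ → ℕ // Q r.1 T})
    (h1 : a.1.1 = b.1.1) (h2 : a.2.1 = b.2.1) : a = b := by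
  obtain ⟨⟨ra, ha⟩, ⟨Ta, hTa⟩⟩ := a
  obtain ⟨⟨rb, hb⟩, ⟨Tb, hTb⟩⟩ := b
  dsimp at h1 h2
  subst h1
  subst h2
  rfl

noncomputable def bdEquiv (hf : IsPartitionFun f L) (hpos : 1 ≤ (cells f L).card) :
    {T : ℕ × ℕ → ℕ // IsSYT f L T} ≃
      Σ r : {x // x ∈ Rin f L}, {T : ℕ × ℕ → ℕ // IsSYT (removeCell f r.1) L T} where
  toFun T :=
    let h := exists_max hf T.2 hpos
    ⟨⟨h.choose, h.choose_spec.1⟩,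
      ⟨fun q => if q = (h.choose, f h.choose) then 0 else T.1 q,
        down hf h.choose_spec.1 T.2 h.choose_spec.2⟩⟩
  invFun x :=
    ⟨fun q => if q = (x.1.1, f x.1.1) then (cells f L).card else x.2.1 q,
      up hf x.1.2 x.2.2⟩
  left_inv := by
    rintro ⟨T, hT⟩
    apply Subtype.ext
    show (fun q => if q = ((exists_max hf hT hpos).choose, f ((exists_max hf hT hpos).choose))
        then (cells f L).card
        else (fun q => if q = ((exists_max hf hT hpos).choose, f ((exists_max hf hT hpos).choose))
          then 0 else T q) q) = T
    funext q
    dsimp only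
    rcases eq_or_ne q ((exists_max hf hT hpos).choose, f ((exists_max hf hT hpos).choose))
      with rfl | hq
    · rw [if_pos rfl]
      exact ((exists_max hf hT hpos).choose_spec.2).symm
    · rw [if_neg hq, if_neg hq]
  right_inv := by
    rintro ⟨⟨r, hr⟩, ⟨T', hT'⟩⟩
    have hup := up hf hr hT'
    have hch : (exists_max hf hup hpos).choose = r := by
      refine unique_max hf hup (exists_max hf hup hpos).choose_spec.1 hr
        (exists_max hf hup hpos).choose_spec.2 ?_
      simp
    refine sig_ext (Q := fun r T => IsSYT (removeCell f r) L T) _ _ ?_ ?_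
    · exact hch
    · show (fun q => if q = ((exists_max hf hup hpos).choose, f ((exists_max hf hup hpos).choose))
          then 0
          else (fun q => if q = (r, f r) then (cells f L).card else T' q) q) = T'
      funext q
      rw [hch]
      dsimp only
      rcases eq_or_ne q (r, f r) with rfl | hq
      · rw [if_pos rfl]
        symm
        apply hT'.2.2
        rw [cells_removeCell hf hr]
        simp
      · rw [if_neg hq, if_neg hq]

lemma BD (hf : IsPartitionFun f L) (hpos : 1 ≤ (cells f L).card) :
    sytCard f L = ∑ r ∈ Rin f L, sytCard (removeCell f r) L := by
  classical
  rw [sytCard_eq]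
  rw [Nat.card_congr (bdEquiv hf hpos)]
  have inst : ∀ r : {x // x ∈ Rin f L}, Fintype {T : ℕ × ℕ → ℕ // IsSYT (removeCell f r.1) L T} :=
    fun _ => Fintype.ofFinite _
  rw [Nat.card_eq_fintype_card]
  rw [Fintype.card_sigma]
  have : ∀ r : {x // x ∈ Rin f L},
      Fintype.card {T : ℕ × ℕ → ℕ // IsSYT (removeCell f r.1) L T} =
        sytCard (removeCell f r.1) L := by
    intro r
    rw [sytCard_eq, Nat.card_eq_fintype_card]
  rw [Finset.sum_congr rfl (fun r _ => this r)]
  exact Finset.sum_coe_sort (Rin f L) (fun r => sytCard (removeCell f r) L)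

end CMV

namespace CMV

variable {f : ℕ → ℕ} {L : ℕ}

lemma step (hf : IsPartitionFun f L) (φ : ℤ → ℤ) :
    ∑ r ∈ Rout f L, φ ((f r : ℤ) + 1 - r) * (sytCard (addCell f r) (L+1) : ℤ) =
      (∑ r ∈ Rout f L, φ ((f r : ℤ) + 1 - r) - ∑ r ∈ Rin f L, φ ((f r : ℤ) - r)) *
        (sytCard f L : ℤ) +
      ∑ r' ∈ Rin f L, ∑ r ∈ Rout (removeCell f r') L,
        φ (((removeCell f r') r : ℤ) + 1 - r) *
          (sytCard (addCell (removeCell f r') r) (L+1) : ℤ) := by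
  classical
  -- Step A: branching down each addCell partition
  have hstep : ∀ r ∈ Rout f L, (sytCard (addCell f r) (L+1) : ℤ) =
      (sytCard f L : ℤ) + ∑ r' ∈ (Rin (addCell f r) (L+1)).erase r,
        (sytCard (removeCell (addCell f r) r') (L+1) : ℤ) := by
    intro r hr
    have hg : IsPartitionFun (addCell f r) (L+1) := isPF_addCell hf hr
    have hcard : 1 ≤ (cells (addCell f r) (L+1)).card := by
      rw [cells_addCell hf hr]
      have := Finset.card_insert_of_notMem (s := cells f L) (a := (r, f r + 1))
      have hnotmem : (r, f r + 1) ∉ cells f L := by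
        rw [mem_cells hf]
        dsimp only
        push_neg
        intro _ _
        omega
      rw [Finset.card_insert_of_notMem hnotmem]
      omega
    have hbd := BD hg hcard
    have hrin : r ∈ Rin (addCell f r) (L+1) := self_mem_Rin_addCell hf hr
    rw [← Finset.add_sum_erase _ _ hrin] at hbd
    rw [removeCell_addCell] at hbd
    have hcongr : sytCard f (L+1) = sytCard f L := sytCard_congr (cells_succ hf)
    rw [hcongr] at hbd
    rw [hbd]
    push_cast
    ring
  -- Step B: expand
  have hB : ∑ r ∈ Rout f L, φ ((f r : ℤ) + 1 - r) * (sytCard (addCell f r) (L+1) : ℤ) =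
      (∑ r ∈ Rout f L, φ ((f r : ℤ) + 1 - r)) * (sytCard f L : ℤ) +
      ∑ r ∈ Rout f L, ∑ r' ∈ (Rin (addCell f r) (L+1)).erase r,
        φ ((f r : ℤ) + 1 - r) * (sytCard (removeCell (addCell f r) r') (L+1) : ℤ) := by
    rw [Finset.sum_mul, ← Finset.sum_add_distrib]
    refine Finset.sum_congr rfl fun r hr => ?_
    rw [hstep r hr, mul_add, Finset.mul_sum]
  rw [hB]
  -- Step C: swap the double sum
  have hC : ∑ r ∈ Rout f L, ∑ r' ∈ (Rin (addCell f r) (L+1)).erase r,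
        φ ((f r : ℤ) + 1 - r) * (sytCard (removeCell (addCell f r) r') (L+1) : ℤ) =
      ∑ r' ∈ Rin f L, ∑ r ∈ (Rout (removeCell f r') L).erase r',
        φ ((f r : ℤ) + 1 - r) * (sytCard (removeCell (addCell f r) r') (L+1) : ℤ) := by
    refine Finset.sum_comm' ?_
    intro x y
    rw [swap_mem hf x y]
    tauto
  rw [hC]
  -- Step D: rewrite each inner term and add back the diagonal
  have hD : ∀ r' ∈ Rin f L,
      ∑ r ∈ (Rout (removeCell f r') L).erase r',
        φ ((f r : ℤ) + 1 - r) * (sytCard (removeCell (addCell f r) r') (L+1) : ℤ) =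
      (∑ r ∈ Rout (removeCell f r') L,
        φ (((removeCell f r') r : ℤ) + 1 - r) *
          (sytCard (addCell (removeCell f r') r) (L+1) : ℤ)) -
        φ ((f r' : ℤ) - r') * (sytCard f L : ℤ) := by
    intro r' hr'
    have hmem : r' ∈ Rout (removeCell f r') L := self_mem_Rout_removeCell hf hr'
    have hdiag : φ (((removeCell f r') r' : ℤ) + 1 - r') *
        (sytCard (addCell (removeCell f r') r') (L+1) : ℤ) =
        φ ((f r' : ℤ) - r') * (sytCard f L : ℤ) := by
      have h1 : 1 ≤ f r' := addCell_pos hr'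
      rw [addCell_removeCell h1, removeCell_apply_self]
      have h2 : ((f r' - 1 : ℕ) : ℤ) + 1 = (f r' : ℤ) := by omega
      rw [h2]
      have hcongr : sytCard f (L+1) = sytCard f L := sytCard_congr (cells_succ hf)
      rw [hcongr]
    have hsum := Finset.add_sum_erase _ (fun r => φ (((removeCell f r') r : ℤ) + 1 - r) *
        (sytCard (addCell (removeCell f r') r) (L+1) : ℤ)) hmem
    have hterms : ∀ r ∈ (Rout (removeCell f r') L).erase r',
        φ ((f r : ℤ) + 1 - r) * (sytCard (removeCell (addCell f r) r') (L+1) : ℤ) =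
        φ (((removeCell f r') r : ℤ) + 1 - r) *
          (sytCard (addCell (removeCell f r') r) (L+1) : ℤ) := by
      intro r hrm
      have hne : r ≠ r' := (Finset.mem_erase.1 hrm).1
      rw [removeCell_addCell_comm hne, removeCell_apply_ne hne]
    beta_reduce at hsum
    rw [Finset.sum_congr rfl hterms, ← hsum, hdiag]
    ring
  rw [Finset.sum_congr rfl hD, Finset.sum_sub_distrib, ← Finset.sum_mul]
  ring

end CMV

namespace CMV

variable {f : ℕ → ℕ} {L : ℕ}

lemma Rin_nonempty_card {r : ℕ} (hf : IsPartitionFun f L) (hr : r ∈ Rin f L) :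
    1 ≤ (cells f L).card :=
  Finset.card_pos.2 ⟨_, corner_mem hf hr⟩

lemma main (n : ℕ) (f : ℕ → ℕ) (L : ℕ) (hf : IsPartitionFun f L)
    (hn : (cells f L).card = n) :
    (∑ r ∈ Rout f L, ((f r : ℤ) + 1 - r) * (sytCard (addCell f r) (L+1) : ℤ) = 0) ∧
    (∑ r ∈ Rout f L, ((f r : ℤ) + 1 - r)^2 * (sytCard (addCell f r) (L+1) : ℤ) =
      (n : ℤ) * (n + 1) * (sytCard f L : ℤ)) := by
  induction n using Nat.strong_induction_on generalizing f L with
  | _ n IH =>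
  have hsum_f : ∑ r ∈ Finset.Icc 1 L, (f r : ℤ) = (n : ℤ) := by
    have h := card_cells hf
    rw [hn] at h
    exact_mod_cast h.symm
  -- cardinalities after removal
  have hrem : ∀ r' ∈ Rin f L, (cells (removeCell f r') L).card = n - 1 := by
    intro r' hr'
    rw [cells_removeCell hf hr', Finset.card_erase_of_mem (corner_mem hf hr'), hn]
  have hIH : ∀ r' ∈ Rin f L,
      (∑ r ∈ Rout (removeCell f r') L, (((removeCell f r') r : ℤ) + 1 - r) *
        (sytCard (addCell (removeCell f r') r) (L+1) : ℤ) = 0) ∧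
      (∑ r ∈ Rout (removeCell f r') L, (((removeCell f r') r : ℤ) + 1 - r)^2 *
        (sytCard (addCell (removeCell f r') r) (L+1) : ℤ) =
        ((n-1 : ℕ) : ℤ) * ((n-1 : ℕ) + 1) * (sytCard (removeCell f r') L : ℤ)) := by
    intro r' hr'
    have hpos : 1 ≤ n := hn ▸ Rin_nonempty_card hf hr'
    exact IH (n-1) (by omega) (removeCell f r') L (isPF_removeCell hf hr') (hrem r' hr')
  constructor
  · -- first moment
    have h := step hf (fun x => x)
    rw [h, shape1 hf]
    rw [Finset.sum_congr rfl (fun r' hr' => (hIH r' hr').1)]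
    simp
  · -- second moment
    have h := step hf (fun x => x^2)
    rw [h, shape2 hf, hsum_f]
    rw [Finset.sum_congr rfl (fun r' hr' => (hIH r' hr').2)]
    rcases Nat.eq_zero_or_pos n with hn0 | hpos
    · -- n = 0 : Rin is empty
      have hRin : Rin f L = ∅ := by
        rw [Finset.eq_empty_iff_forall_notMem]
        intro r hr
        have := Rin_nonempty_card hf hr
        omega
      subst hn0
      rw [hRin]
      simp
    · have hbd : (sytCard f L : ℤ) = ∑ r' ∈ Rin f L, (sytCard (removeCell f r') L : ℤ) := by
        have := BD hf (by omega)
        exact_mod_cast this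
      have hc : ((n-1 : ℕ) : ℤ) = (n : ℤ) - 1 := by omega
      rw [← Finset.mul_sum, ← hbd, hc]
      have hy : ∑ r ∈ Rin f L, ((f r : ℤ) - r)^2 - ∑ r ∈ Rin f L, ((f r : ℤ) - r)^2 = 0 := by ring
      ring_nf

lemma outer_eq_image (hf : IsPartitionFun f L) :
    outerCorners f L = (Rout f L).image (fun r => (r, f r + 1)) := by
  ext c
  simp only [outerCorners, Finset.mem_image, Finset.mem_filter, Finset.mem_product,
    Finset.mem_Icc, mem_Rout]
  constructor
  · rintro ⟨⟨⟨h1, h2⟩, ⟨h3, h4⟩⟩, h5, h6⟩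
    refine ⟨c.1, ⟨⟨h1, h2⟩, ?_⟩, ?_⟩
    · rcases h6 with h | h
      · exact Or.inl h
      · right; omega
    · rw [Prod.ext_iff]
      exact ⟨rfl, h5.symm⟩
  · rintro ⟨r, ⟨⟨h1, h2⟩, h3⟩, rfl⟩
    dsimp only
    have hf1 : f r ≤ f 1 := by
      rcases eq_or_ne r 1 with rfl | hne
      · exact le_rfl
      · exact anti hf le_rfl h1
    refine ⟨⟨⟨h1, h2⟩, ⟨by omega, by omega⟩⟩, rfl, ?_⟩
    rcases h3 with h | h
    · exact Or.inl h
    · right; omega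

end CMV


/-- **Probabilistic corollary**: the content `X = s − r` of the outer corner added by
Robinson–Schensted insertion has `E(X) = 0` and `Var(X) = n`; equivalently
`Σ (s−r)·f^{λ+c} = 0` and `Σ (s−r)²·f^{λ+c} = n(n+1)·f^λ`. -/
theorem content_mean_variance (f : ℕ → ℕ) (L n : ℕ) (hf : IsPartitionFun f L)
    (hn : (cells f L).card = n) :
    (∑ c ∈ outerCorners f L, ((c.2 : ℤ) - c.1) * sytCard (addCell f c.1) (L + 1) = 0) ∧
    (∑ c ∈ outerCorners f L, ((c.2 : ℤ) - c.1) ^ 2 * sytCard (addCell f c.1) (L + 1) =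
      (n : ℤ) * (n + 1) * sytCard f L) := by
  have hmain := CMV.main n f L hf hn
  have himg : ∀ (g : ℕ × ℕ → ℤ), ∑ c ∈ outerCorners f L, g c =
      ∑ r ∈ CMV.Rout f L, g (r, f r + 1) := by
    intro g
    rw [CMV.outer_eq_image hf]
    rw [Finset.sum_image]
    intro a _ b _ hab
    exact congrArg Prod.fst hab
  constructor
  · rw [himg (fun c => ((c.2 : ℤ) - c.1) * sytCard (addCell f c.1) (L + 1))]
    rw [← hmain.1]
    refine Finset.sum_congr rfl fun r _ => ?_
    dsimp only
    push_cast
    ring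
  · rw [himg (fun c => ((c.2 : ℤ) - c.1)^2 * sytCard (addCell f c.1) (L + 1))]
    rw [← hmain.2]
    refine Finset.sum_congr rfl fun r _ => ?_
    dsimp only
    push_cast
    ring
end

section
/- Let λ be a partition with ℓ(λ) parts and largest part λ_1, and let μ be the complementary partition of λ with respect to (ℓ(λ)+1, λ_1). If (i,j) ∈ [λ] lies in the same row as some outer corner of λ and in the same column as some outer corner of λ, then the hook length of (i,j) in λ plus 1 equals the hook length of the square (λ'_j + 1, λ_i + 1) in μ minus 1; i.e., h^λ_{ij} + 2 = h^μ_{λ'_j+1, λ_i+1}, where hook lengths and conjugates are taken in the respective diagrams (after the standard 180° rotation identification of [μ] with the complement of [λ] in the (ℓ(λ)+1)×λ_1 rectangle). -/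
open Finset

/-- The complementary partition of `λ` with respect to an `a × b` rectangle:
row lengths `b − λ_{a+1−k}` for `1 ≤ k ≤ a` (and `0` beyond). -/
def complPart (f : ℕ → ℕ) (a b : ℕ) : ℕ → ℕ :=
  fun k => if k ≤ a then b - f (a + 1 - k) else 0

/-- If `(i,j) ∈ [λ]` is in the same row as an outer corner and the same column as an
outer corner, then `h^λ_{ij} + 2 = h^μ` at the rotated position of `(λ'_j+1, λ_i+1)`,
where `μ` is the complement of `λ` with respect to `(ℓ(λ)+1, λ_1)`. -/
theorem hook_complement (f : ℕ → ℕ) (L i j : ℕ) (hf : IsPartitionFun f L)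
    (hlen : ∀ k, 1 ≤ k → k ≤ L → 0 < f k) (hij : (i, j) ∈ cells f L)
    (hrow : ∃ s, (i, s) ∈ outerCorners f L) (hcol : ∃ r, (r, j) ∈ outerCorners f L) :
    hook f L i j + 2 =
      hook (complPart f (L + 1) (f 1)) (L + 1) ((L + 1) - conj f L j) (f 1 - f i) := by
  obtain ⟨s, hs⟩ := hrow
  obtain ⟨r, hr⟩ := hcol
  obtain ⟨hmono, hzero⟩ := hf
  have mono : ∀ a b, 1 ≤ a → a ≤ b → f b ≤ f a := by
    intro a b ha hab
    induction b with
    | zero => omega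
    | succ n ih =>
      rcases Nat.lt_or_ge a (n + 1) with h | h
      · exact le_trans (hmono n (by omega)) (ih (by omega))
      · have : a = n + 1 := by omega
        simp [this]
  simp only [cells, Finset.mem_filter, Finset.mem_product, Finset.mem_Icc] at hij
  simp only [outerCorners, Finset.mem_filter, Finset.mem_product, Finset.mem_Icc] at hr hs
  obtain ⟨⟨⟨hi1, hiL⟩, hj1, hjf1⟩, hji⟩ := hij
  obtain ⟨⟨⟨hr1, hrL⟩, _⟩, hjr, hrdisj⟩ := hr
  obtain ⟨_, hsval, hsdisj⟩ := hs
  have hfi1 : f i ≤ f 1 := mono 1 i le_rfl hi1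
  have hr2 : 2 ≤ r := by
    by_contra h
    have hr1' : r = 1 := by omega
    subst hr1'
    omega
  have hfr1 : j ≤ f (r - 1) := by rcases hrdisj with h | h <;> omega
  have hir : i < r := by
    by_contra h
    have := mono r i hr1 (by omega)
    omega
  have hkeyrow : ∀ m, 1 ≤ m → m < i → f i < f m := by
    intro m hm1 hmi
    rcases hsdisj with h | h
    · omega
    · have := mono m (i - 1) hm1 (by omega)
      omega
  have conj1 : conj f L j = r - 1 := by
    unfold conj
    have : (Finset.Icc 1 L).filter (fun m => j ≤ f m) = Finset.Icc 1 (r - 1) := by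
      ext m
      simp only [Finset.mem_filter, Finset.mem_Icc]
      constructor
      · rintro ⟨⟨h1, h2⟩, h3⟩
        refine ⟨h1, ?_⟩
        by_contra h
        have := mono r m hr1 (by omega)
        omega
      · rintro ⟨h1, h2⟩
        have := mono m (r - 1) h1 h2
        exact ⟨⟨h1, by omega⟩, by omega⟩
    rw [this, Nat.card_Icc]
    omega
  have conj2 : conj (complPart f (L + 1) (f 1)) (L + 1) (f 1 - f i) = L + 2 - i := by
    unfold conj complPart
    have : (Finset.Icc 1 (L + 1)).filter
        (fun k => f 1 - f i ≤ if k ≤ L + 1 then f 1 - f (L + 1 + 1 - k) else 0) =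
        Finset.Icc 1 (L + 2 - i) := by
      ext k
      simp only [Finset.mem_filter, Finset.mem_Icc]
      constructor
      · rintro ⟨⟨h1, h2⟩, h3⟩
        rw [if_pos h2] at h3
        refine ⟨h1, ?_⟩
        by_contra h
        have hk := hkeyrow (L + 1 + 1 - k) (by omega) (by omega)
        have := mono 1 (L + 1 + 1 - k) le_rfl (by omega)
        omega
      · rintro ⟨h1, h2⟩
        have h2' : k ≤ L + 1 := by omega
        refine ⟨⟨h1, h2'⟩, ?_⟩
        rw [if_pos h2']
        have := mono i (L + 1 + 1 - k) hi1 (by omega)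
        omega
    rw [this, Nat.card_Icc]
    omega
  have hI : L + 1 - (r - 1) ≤ L + 1 := by omega
  have hIval : L + 1 + 1 - (L + 1 - (r - 1)) = r := by omega
  have hmu : complPart f (L + 1) (f 1) (L + 1 - (r - 1)) = f 1 - f r := by
    unfold complPart
    rw [if_pos hI, hIval]
  unfold hook
  rw [conj1, conj2, hmu]
  omega
end

section
/- Weighted branching rule specialization: substituting x_i = 1 and y_j = 1 for all i, j in the weighted branching formula yields n · ∏_{z ∈ [λ]\C[λ]} (h_z − 1) = Σ_{(r,s)∈C[λ]} [∏_{(i,j)∈[λ]\C[λ], i≠r, j≠s} (h_{ij} − 1)] · ∏_{i=1}^{r} h_{is} · ∏_{j=1}^{s} h_{rj}, and this identity is equivalent (upon division by ∏_{z∈[λ]\C[λ]}(h_z−1) · ∏ appropriate hook lengths, all nonzero) to the branching rule Σ_{(r,s)∈C[λ]} (1/n) ∏_{i=1}^{r−1} h_{is}/(h_{is}−1) ∏_{j=1}^{s−1} h_{rj}/(h_{rj}−1) = 1. -/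
open Finset

section lems
variable {f : ℕ → ℕ} {L : ℕ}

lemma pf_mono (hf : IsPartitionFun f L) {i j : ℕ} (hi : 1 ≤ i) (hij : i ≤ j) : f j ≤ f i := by
  induction j, hij using Nat.le_induction with
  | base => exact le_rfl
  | succ k hk ih => exact le_trans (hf.1 k (le_trans hi hk)) ih

lemma mem_cells_iff (hf : IsPartitionFun f L) {p : ℕ × ℕ} :
    p ∈ cells f L ↔ 1 ≤ p.1 ∧ p.1 ≤ L ∧ 1 ≤ p.2 ∧ p.2 ≤ f p.1 := by
  simp only [cells, mem_filter, mem_product, mem_Icc]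
  constructor
  · rintro ⟨⟨⟨h1, h2⟩, h3, _⟩, h5⟩; exact ⟨h1, h2, h3, h5⟩
  · rintro ⟨h1, h2, h3, h5⟩
    exact ⟨⟨⟨h1, h2⟩, h3, le_trans h5 (pf_mono hf le_rfl h1)⟩, h5⟩

lemma le_conj (hf : IsPartitionFun f L) {i j : ℕ} (hi1 : 1 ≤ i) (hiL : i ≤ L)
    (hj : j ≤ f i) : i ≤ conj f L j := by
  have : Finset.Icc 1 i ⊆ (Finset.Icc 1 L).filter fun i' => j ≤ f i' := by
    intro x hx
    simp only [mem_Icc] at hx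
    simp only [mem_filter, mem_Icc]
    exact ⟨⟨hx.1, le_trans hx.2 hiL⟩, le_trans hj (pf_mono hf hx.1 hx.2)⟩
  simpa [conj] using (Finset.card_le_card this).trans_eq' (by simp)

lemma corner_spec (hf : IsPartitionFun f L) {r s : ℕ} (hc : (r, s) ∈ corners f L) :
    1 ≤ r ∧ r ≤ L ∧ 1 ≤ s ∧ f r = s ∧ f (r + 1) < s := by
  simp only [corners, mem_filter] at hc
  obtain ⟨hcell, h1, h2⟩ := hc
  rw [mem_cells_iff hf] at hcell
  exact ⟨hcell.1, hcell.2.1, hcell.2.2.1, h1.symm, h2⟩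

lemma conj_corner (hf : IsPartitionFun f L) {r s : ℕ} (hc : (r, s) ∈ corners f L) :
    conj f L s = r := by
  obtain ⟨hr1, hrL, hs1, hfr, hlt⟩ := corner_spec hf hc
  have : ((Finset.Icc 1 L).filter fun i => s ≤ f i) = Finset.Icc 1 r := by
    ext x
    simp only [mem_filter, mem_Icc]
    constructor
    · rintro ⟨⟨hx1, hxL⟩, hsx⟩
      refine ⟨hx1, ?_⟩
      by_contra hxr
      push_neg at hxr
      have h2 : f x ≤ f (r + 1) := pf_mono hf (by omega) (by omega)
      omega
    · rintro ⟨hx1, hxr⟩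
      exact ⟨⟨hx1, le_trans hxr hrL⟩, hfr ▸ pf_mono hf hx1 hxr⟩
  simp [conj, this]

lemma hook_corner (hf : IsPartitionFun f L) {r s : ℕ} (hc : (r, s) ∈ corners f L) :
    hook f L r s = 1 := by
  obtain ⟨_, _, _, hfr, _⟩ := corner_spec hf hc
  simp [hook, conj_corner hf hc, hfr]

lemma hook_ge_two (hf : IsPartitionFun f L) {p : ℕ × ℕ}
    (hp : p ∈ cells f L \ corners f L) : 2 ≤ hook f L p.1 p.2 := by
  obtain ⟨hcell, hnc⟩ := Finset.mem_sdiff.mp hp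
  have hc := (mem_cells_iff hf).mp hcell
  simp only [corners, mem_filter, hcell, true_and, not_and, not_lt] at hnc
  rcases lt_or_eq_of_le hc.2.2.2 with hlt | heq

  · have : 1 ≤ f p.1 - p.2 := by omega
    simp only [hook]; omega
  · have hle := hnc heq
    have hL : p.1 + 1 ≤ L := by
      by_contra h
      have := hf.2 (p.1 + 1) (by omega)
      omega
    have := le_conj hf (by omega) hL hle
    simp only [hook]; omega

lemma hook_pos (hf : IsPartitionFun f L) (i j : ℕ) : 1 ≤ hook f L i j := by
  simp [hook]

end lems

section lems2
variable {f : ℕ → ℕ} {L : ℕ}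

lemma col_mem (hf : IsPartitionFun f L) {r s : ℕ} (hc : (r, s) ∈ corners f L)
    {i : ℕ} (hi : i ∈ Finset.Icc 1 (r - 1)) : (i, s) ∈ cells f L \ corners f L := by
  obtain ⟨hr1, hrL, hs1, hfr, hlt⟩ := corner_spec hf hc
  simp only [mem_Icc] at hi
  have hcell : (i, s) ∈ cells f L := by
    rw [mem_cells_iff hf]
    refine ⟨hi.1, by omega, hs1, ?_⟩
    have := pf_mono hf hi.1 (show i ≤ r by omega)
    show s ≤ f i
    omega
  rw [Finset.mem_sdiff]
  refine ⟨hcell, fun hcor => ?_⟩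
  have hlt2 : f (i + 1) < s := ((Finset.mem_filter.mp hcor).2).2
  have : f r ≤ f (i + 1) := pf_mono hf (by omega) (by omega)
  omega

lemma row_mem (hf : IsPartitionFun f L) {r s : ℕ} (hc : (r, s) ∈ corners f L)
    {j : ℕ} (hj : j ∈ Finset.Icc 1 (s - 1)) : (r, j) ∈ cells f L \ corners f L := by
  obtain ⟨hr1, hrL, hs1, hfr, hlt⟩ := corner_spec hf hc
  simp only [mem_Icc] at hj
  have hcell : (r, j) ∈ cells f L := by
    rw [mem_cells_iff hf]
    exact ⟨hr1, hrL, hj.1, show j ≤ f r by omega⟩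
  rw [Finset.mem_sdiff]
  refine ⟨hcell, fun hcor => ?_⟩
  have heq : j = f r := ((Finset.mem_filter.mp hcor).2).1
  omega

lemma filter_not_eq (hf : IsPartitionFun f L) {r s : ℕ} (hc : (r, s) ∈ corners f L) :
    ((cells f L \ corners f L).filter fun p => ¬(p.1 ≠ r ∧ p.2 ≠ s)) =
      (Finset.Icc 1 (r - 1) ×ˢ {s}) ∪ ({r} ×ˢ Finset.Icc 1 (s - 1)) := by
  obtain ⟨hr1, hrL, hs1, hfr, hlt⟩ := corner_spec hf hc
  ext p
  simp only [mem_filter, Finset.mem_union, Finset.mem_product, Finset.mem_singleton,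
    not_and, not_ne_iff, ne_eq, not_not]
  constructor
  · rintro ⟨hp, hor⟩
    obtain ⟨hcell, hnc⟩ := Finset.mem_sdiff.mp hp
    have hc2 := (mem_cells_iff hf).mp hcell
    by_cases h2 : p.2 = s
    · left
      refine ⟨?_, h2⟩
      have hle : p.1 ≤ conj f L s := le_conj hf hc2.1 hc2.2.1 (h2 ▸ hc2.2.2.2)
      rw [conj_corner hf hc] at hle
      have hne : p.1 ≠ r := by
        rintro rfl
        exact hnc (by rwa [show p = (p.1, s) from Prod.ext rfl h2])
      simp only [mem_Icc]
      omega
    · right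
      have h1 : p.1 = r := by
        by_contra h1
        exact h2 (hor h1)
      refine ⟨h1, ?_⟩
      simp only [mem_Icc]
      have := hc2.2.2.2
      rw [h1, hfr] at this
      omega
  · rintro (⟨hi, h2⟩ | ⟨h1, hj⟩)
    · have := col_mem hf hc (i := p.1) hi
      rw [show ((p.1 : ℕ), s) = p from Prod.ext rfl h2.symm] at this
      exact ⟨this, fun _ => h2⟩
    · have := row_mem hf hc (j := p.2) hj
      rw [show ((r : ℕ), p.2) = p from Prod.ext h1.symm rfl] at this
      exact ⟨this, fun h => absurd h1 h⟩

lemma D_split (hf : IsPartitionFun f L) {r s : ℕ} (hc : (r, s) ∈ corners f L) :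
    ∏ z ∈ cells f L \ corners f L, (hook f L z.1 z.2 - 1) =
      (∏ p ∈ ((cells f L) \ corners f L).filter (fun p => p.1 ≠ r ∧ p.2 ≠ s),
          (hook f L p.1 p.2 - 1)) *
      ((∏ i ∈ Finset.Icc 1 (r - 1), (hook f L i s - 1)) *
       (∏ j ∈ Finset.Icc 1 (s - 1), (hook f L r j - 1))) := by
  rw [← Finset.prod_filter_mul_prod_filter_not (cells f L \ corners f L)
    (fun p => p.1 ≠ r ∧ p.2 ≠ s)]
  congr 1
  rw [filter_not_eq hf hc, Finset.prod_union, Finset.prod_product, Finset.prod_product]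
  · simp
  · rw [Finset.disjoint_left]
    rintro ⟨a, b⟩ h1 h2
    simp only [Finset.mem_product, Finset.mem_singleton, mem_Icc] at h1 h2
    obtain ⟨hr1, -, -, -, -⟩ := corner_spec hf hc
    omega
end lems2

set_option maxHeartbeats 1000000 in
/-- Specializing the weighted branching rule at all variables `1` gives the integer
identity `n·∏_{z∈[λ]∖C[λ]}(h_z−1) = Σ_{(r,s)∈C[λ]} […]`, and this identity is
equivalent to the branching rule for the hook lengths. -/
theorem wbr_specialization_equiv (f : ℕ → ℕ) (L n : ℕ) (hf : IsPartitionFun f L)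
    (hn : (cells f L).card = n) (hpos : 0 < n) :
    (n * ∏ z ∈ (cells f L) \ corners f L, (hook f L z.1 z.2 - 1) =
      ∑ c ∈ corners f L,
        (∏ p ∈ ((cells f L) \ corners f L).filter (fun p => p.1 ≠ c.1 ∧ p.2 ≠ c.2),
            (hook f L p.1 p.2 - 1)) *
        (∏ i ∈ Finset.Icc 1 c.1, hook f L i c.2) *
        (∏ j ∈ Finset.Icc 1 c.2, hook f L c.1 j)) ↔
    (∑ c ∈ corners f L, (1 / (n : ℚ)) *
        (∏ i ∈ Finset.Icc 1 (c.1 - 1), (hook f L i c.2 : ℚ) / ((hook f L i c.2 : ℚ) - 1)) *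
        (∏ j ∈ Finset.Icc 1 (c.2 - 1), (hook f L c.1 j : ℚ) / ((hook f L c.1 j : ℚ) - 1)) = 1) := by
  classical
  have hnne : (n : ℚ) ≠ 0 := Nat.cast_ne_zero.mpr hpos.ne'
  have hDnat : ∏ z ∈ cells f L \ corners f L, (hook f L z.1 z.2 - 1) ≠ 0 := by
    refine Finset.prod_ne_zero_iff.mpr fun z hz => ?_
    have := hook_ge_two hf hz
    omega
  have hDne : ((∏ z ∈ cells f L \ corners f L, (hook f L z.1 z.2 - 1) : ℕ) : ℚ) ≠ 0 :=
    Nat.cast_ne_zero.mpr hDnat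
  have key : ∀ c ∈ corners f L,
      (1 / (n : ℚ)) *
        (∏ i ∈ Finset.Icc 1 (c.1 - 1), (hook f L i c.2 : ℚ) / ((hook f L i c.2 : ℚ) - 1)) *
        (∏ j ∈ Finset.Icc 1 (c.2 - 1), (hook f L c.1 j : ℚ) / ((hook f L c.1 j : ℚ) - 1)) =
      (((∏ p ∈ ((cells f L) \ corners f L).filter (fun p => p.1 ≠ c.1 ∧ p.2 ≠ c.2),
            (hook f L p.1 p.2 - 1)) *
        (∏ i ∈ Finset.Icc 1 c.1, hook f L i c.2) *
        (∏ j ∈ Finset.Icc 1 c.2, hook f L c.1 j) : ℕ) : ℚ) /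
        ((n : ℚ) * ((∏ z ∈ cells f L \ corners f L, (hook f L z.1 z.2 - 1) : ℕ) : ℚ)) := by
    intro c hc
    have hc' : (c.1, c.2) ∈ corners f L := by simpa using hc
    obtain ⟨hr1, hrL, hs1, hfr, hlt⟩ := corner_spec hf hc'
    set A : ℚ := ∏ i ∈ Finset.Icc 1 (c.1 - 1), ((hook f L i c.2 : ℚ) - 1) with hA'
    set B : ℚ := ∏ j ∈ Finset.Icc 1 (c.2 - 1), ((hook f L c.1 j : ℚ) - 1) with hB'
    set F : ℚ := ((∏ p ∈ ((cells f L) \ corners f L).filter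
        (fun p => p.1 ≠ c.1 ∧ p.2 ≠ c.2), (hook f L p.1 p.2 - 1) : ℕ) : ℚ) with hF'
    set P : ℚ := ∏ i ∈ Finset.Icc 1 (c.1 - 1), (hook f L i c.2 : ℚ) with hP'
    set Q : ℚ := ∏ j ∈ Finset.Icc 1 (c.2 - 1), (hook f L c.1 j : ℚ) with hQ'
    have hA : ((∏ i ∈ Finset.Icc 1 (c.1 - 1), (hook f L i c.2 - 1) : ℕ) : ℚ) = A := by
      rw [hA', Nat.cast_prod]
      exact Finset.prod_congr rfl fun i _ => by
        rw [Nat.cast_sub (hook_pos hf i c.2), Nat.cast_one]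
    have hB : ((∏ j ∈ Finset.Icc 1 (c.2 - 1), (hook f L c.1 j - 1) : ℕ) : ℚ) = B := by
      rw [hB', Nat.cast_prod]
      exact Finset.prod_congr rfl fun j _ => by
        rw [Nat.cast_sub (hook_pos hf c.1 j), Nat.cast_one]
    have hAne : A ≠ 0 := by
      rw [hA']
      refine Finset.prod_ne_zero_iff.mpr fun i hi => sub_ne_zero.mpr ?_
      have h2 : 2 ≤ hook f L i c.2 := hook_ge_two hf (col_mem hf hc' hi)
      exact_mod_cast (by omega : hook f L i c.2 ≠ 1)
    have hBne : B ≠ 0 := by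
      rw [hB']
      refine Finset.prod_ne_zero_iff.mpr fun j hj => sub_ne_zero.mpr ?_
      have h2 : 2 ≤ hook f L c.1 j := hook_ge_two hf (row_mem hf hc' hj)
      exact_mod_cast (by omega : hook f L c.1 j ≠ 1)
    have hFne : F ≠ 0 := by
      rw [hF', Nat.cast_ne_zero]
      refine Finset.prod_ne_zero_iff.mpr fun p hp => ?_
      have := hook_ge_two hf (Finset.mem_filter.mp hp).1
      omega
    have hD : ((∏ z ∈ cells f L \ corners f L, (hook f L z.1 z.2 - 1) : ℕ) : ℚ) =
        F * (A * B) := by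
      rw [hF']
      rw [D_split hf hc', Nat.cast_mul, Nat.cast_mul, hA, hB]
    have hP : ((∏ i ∈ Finset.Icc 1 c.1, hook f L i c.2 : ℕ) : ℚ) = P := by
      have h1 : ∏ i ∈ Finset.Icc 1 c.1, hook f L i c.2 =
          (∏ i ∈ Finset.Icc 1 (c.1 - 1), hook f L i c.2) * hook f L c.1 c.2 := by
        conv_lhs => rw [show c.1 = c.1 - 1 + 1 by omega]
        rw [Finset.prod_Icc_succ_top (by omega), show c.1 - 1 + 1 = c.1 by omega]
      rw [h1, hook_corner hf hc', mul_one, Nat.cast_prod, hP']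
    have hQ : ((∏ j ∈ Finset.Icc 1 c.2, hook f L c.1 j : ℕ) : ℚ) = Q := by
      have h1 : ∏ j ∈ Finset.Icc 1 c.2, hook f L c.1 j =
          (∏ j ∈ Finset.Icc 1 (c.2 - 1), hook f L c.1 j) * hook f L c.1 c.2 := by
        conv_lhs => rw [show c.2 = c.2 - 1 + 1 by omega]
        rw [Finset.prod_Icc_succ_top (by omega), show c.2 - 1 + 1 = c.2 by omega]
      rw [h1, hook_corner hf hc', mul_one, Nat.cast_prod, hQ']
    rw [Finset.prod_div_distrib, Finset.prod_div_distrib, ← hA', ← hB', ← hP', ← hQ',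
      Nat.cast_mul, Nat.cast_mul, hP, hQ, hD]
    field_simp
    rw [hF', Nat.cast_prod]
  have hsum : (∑ c ∈ corners f L, (1 / (n : ℚ)) *
        (∏ i ∈ Finset.Icc 1 (c.1 - 1), (hook f L i c.2 : ℚ) / ((hook f L i c.2 : ℚ) - 1)) *
        (∏ j ∈ Finset.Icc 1 (c.2 - 1), (hook f L c.1 j : ℚ) / ((hook f L c.1 j : ℚ) - 1))) =
      ((∑ c ∈ corners f L,
        (∏ p ∈ ((cells f L) \ corners f L).filter (fun p => p.1 ≠ c.1 ∧ p.2 ≠ c.2),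
            (hook f L p.1 p.2 - 1)) *
        (∏ i ∈ Finset.Icc 1 c.1, hook f L i c.2) *
        (∏ j ∈ Finset.Icc 1 c.2, hook f L c.1 j) : ℕ) : ℚ) /
        ((n : ℚ) * ((∏ z ∈ cells f L \ corners f L, (hook f L z.1 z.2 - 1) : ℕ) : ℚ)) := by
    rw [Nat.cast_sum, Finset.sum_div]
    exact Finset.sum_congr rfl key
  rw [hsum, div_eq_one_iff_eq (mul_ne_zero hnne hDne)]
  constructor <;> intro h <;> exact_mod_cast h.symm
end
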